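/- arXiv:1412.3931 — 4 statements merged into one kernel-verified Lean document; each statement's English description precedes it below -/
import Mathlib

section
/- The multivariate Krawtchouk polynomials Q_n(X;u), defined as the coefficients of w_1^{n_1}⋯w_{d-1}^{n_{d-1}} in G(x,w,u) = Π_{j=1}^d (1 + Σ_{l=1}^{d-1} w_l u_j^{(l)})^{x_j}, satisfy the orthogonality relation E[Q_m(X;u) Q_n(X;u)] = δ_{mn} · N!/(n_1!⋯n_{d-1}!(N-|n|)!) · Π_{l=1}^{d-1} a_l^{n_l} when X is multinomial(N,p), for |m|,|n| ≤ N. -/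
/-!
Put `G(x, w) = ∏ⱼ (1 + ∑ₗ wₗ uⱼ⁽ˡ⁾) ^ xⱼ`. Multiplying the generating series of `Q_m(X)` and
`Q_n(X)` and taking expectations, `∑_{m,n} E[Q_m Q_n] wᵐ vⁿ = E[G(X, w) G(X, v)]`, and by the
multinomial theorem this is `(∑ⱼ pⱼ (1 + ∑ₗ wₗ uⱼ⁽ˡ⁾)(1 + ∑ₗ vₗ uⱼ⁽ˡ⁾))ᴺ = (1 + ∑ₗ aₗ wₗ vₗ)ᴺ`
by the orthogonality of the `u⁽ˡ⁾` (with `u⁽⁰⁾ = 1`). Expanding `(1 + ∑ₗ aₗ wₗ vₗ)ᴺ` once more by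
the multinomial theorem gives a diagonal series with the claimed coefficients. Both series
converge for all `w, v`, so their coefficients agree.
-/

open Finset

section PowerSeriesCoefficients

variable {𝕜 : Type*} [NontriviallyNormedField 𝕜]

theorem eq_zero_of_forall_hasSum_mul_pow_zero {c : ℕ → 𝕜}
    (h : ∀ t : 𝕜, HasSum (fun j => c j * t ^ j) 0) : c = 0 := by
  have hseries : HasFPowerSeriesAt 0 (FormalMultilinearSeries.ofScalars 𝕜 c) 0 := by
    refine ⟨1, ⟨?_, one_pos, fun {t} _ => ?_⟩⟩
    · refine ENNReal.coe_one ▸ FormalMultilinearSeries.le_radius_of_tendsto _ (l := 0) ?_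
      simpa [FormalMultilinearSeries.ofScalars_norm] using (h 1).summable.tendsto_atTop_zero.norm
    · simpa [FormalMultilinearSeries.ofScalars_apply_eq, mul_comm] using h t
  exact (FormalMultilinearSeries.ofScalars_series_eq_zero (E := 𝕜)).1 hseries.eq_zero

variable [CompleteSpace 𝕜]

theorem eq_zero_of_forall_hasSum_mul_prod_pow_zero_option {ι : Type*} [Fintype ι]
    (ih : ∀ c : (ι → ℕ) → 𝕜, (∀ w : ι → 𝕜, HasSum (fun n => c n * ∏ i, w i ^ n i) 0) → c = 0)
    {c : (Option ι → ℕ) → 𝕜}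
    (h : ∀ w : Option ι → 𝕜, HasSum (fun n => c n * ∏ i, w i ^ n i) 0) : c = 0 := by
  let e : (Option ι → ℕ) ≃ ℕ × (ι → ℕ) := Equiv.piOptionEquivProd
  have hsplit : ∀ (t : 𝕜) (w : ι → 𝕜),
      HasSum (fun q : ℕ × (ι → ℕ) => c (e.symm q) * (t ^ q.1 * ∏ i, w i ^ q.2 i)) 0 := by
    intro t w
    simpa [Function.comp_def, Fintype.prod_option, e, Equiv.piOptionEquivProd] using
      e.symm.hasSum_iff.2 (h fun o => o.elim t w)
  have hfiber : ∀ (w : ι → 𝕜) (j : ℕ),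
      Summable fun n => c (e.symm (j, n)) * ∏ i, w i ^ n i := fun w j => by
    simpa using (hsplit 1 w).summable.prod_factor j
  -- For fixed `w`, the fibre sums are the coefficients of a power series in `t` summing to `0`.
  have hfiber_zero : ∀ (w : ι → 𝕜) (j : ℕ), ∑' n, c (e.symm (j, n)) * ∏ i, w i ^ n i = 0 := by
    intro w
    refine congrFun (eq_zero_of_forall_hasSum_mul_pow_zero fun t => ?_)
    refine (hsplit t w).prod_fiberwise fun j => ?_
    have hmul := (hfiber w j).hasSum.mul_left (t ^ j)
    rw [mul_comm (t ^ j)] at hmul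
    exact hmul.congr_fun fun n => by ring
  have hslice : ∀ j, (fun n => c (e.symm (j, n))) = 0 := fun j =>
    ih _ fun w => hfiber_zero w j ▸ (hfiber w j).hasSum
  funext n
  simpa using congrFun (hslice (e n).1) (e n).2

theorem eq_zero_of_forall_hasSum_mul_prod_pow_zero {ι : Type*} [Fintype ι]
    {c : (ι → ℕ) → 𝕜} (h : ∀ w : ι → 𝕜, HasSum (fun n => c n * ∏ i, w i ^ n i) 0) : c = 0 := by
  refine Fintype.induction_empty_option (P := fun ι _ => ∀ {c : (ι → ℕ) → 𝕜},
    (∀ w : ι → 𝕜, HasSum (fun n => c n * ∏ i, w i ^ n i) 0) → c = 0) ?_ ?_ ?_ ι h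
  · intro α β _ e hα c h
    let : Fintype α := Fintype.ofEquiv β e.symm
    let E : (α → ℕ) ≃ (β → ℕ) := e.arrowCongr (Equiv.refl ℕ)
    have hc : (fun n => c (E n)) = 0 := hα fun w => by
      convert E.hasSum_iff.2 (h (w ∘ e.symm)) using 2 with n
      simp only [Function.comp_apply, E, Equiv.arrowCongr_apply, Equiv.coe_refl]
      congr 1
      exact Fintype.prod_equiv e _ _ fun a => by simp
    funext n
    have hn : E (n ∘ e) = n := by ext b; simp [E]
    simpa [hn] using congrFun hc (n ∘ e)
  · intro c h
    funext n
    simpa using ((h 0).unique (hasSum_single n fun n' hn' => (hn' (Subsingleton.elim _ _)).elim)).symm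
  · intro α _ ih c h
    exact eq_zero_of_forall_hasSum_mul_prod_pow_zero_option (fun _ => ih) h

theorem eq_of_forall_hasSum_mul_prod_pow_mul_prod_pow {ι κ : Type*} [Fintype ι] [Fintype κ]
    {c c' : (ι → ℕ) × (κ → ℕ) → 𝕜} {F : (ι → 𝕜) → (κ → 𝕜) → 𝕜}
    (hc : ∀ w v, HasSum (fun q => c q * ((∏ i, w i ^ q.1 i) * ∏ k, v k ^ q.2 k)) (F w v))
    (hc' : ∀ w v, HasSum (fun q => c' q * ((∏ i, w i ^ q.1 i) * ∏ k, v k ^ q.2 k)) (F w v)) :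
    c = c' := by
  let E : (ι ⊕ κ → ℕ) ≃ (ι → ℕ) × (κ → ℕ) := Equiv.sumArrowEquivProdArrow ι κ ℕ
  have hdiff : (fun n => c (E n) - c' (E n)) = 0 := by
    refine eq_zero_of_forall_hasSum_mul_prod_pow_zero fun W => ?_
    have hsub := (hc (W ∘ Sum.inl) (W ∘ Sum.inr)).sub (hc' (W ∘ Sum.inl) (W ∘ Sum.inr))
    rw [sub_self] at hsub
    refine (E.hasSum_iff.2 hsub).congr_fun fun n => ?_
    simp only [Function.comp_apply, Fintype.prod_sum_type, sub_mul]
    rfl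
  funext q
  simpa [sub_eq_zero] using congrFun hdiff (E.symm q)

end PowerSeriesCoefficients

section Multinomial

variable {ι : Type*} [Fintype ι] [DecidableEq ι]

noncomputable def multinomialMean (N : ℕ) (p : ι → ℝ) (f : (ι → ℕ) → ℝ) : ℝ :=
  ∑ x ∈ piAntidiag univ N,
    (N.factorial : ℝ) / (∏ i, (x i).factorial) * (∏ i, p i ^ x i) * f x

theorem tsum_ite_sum_eq_eq_multinomialMean (N : ℕ) (p : ι → ℝ) (f : (ι → ℕ) → ℝ) :
    ∑' x : ι → ℕ, (if ∑ i, x i = N then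
        (N.factorial : ℝ) / (∏ i, (x i).factorial) * (∏ i, p i ^ x i) * f x else 0)
      = multinomialMean N p f := by
  rw [tsum_eq_sum (s := piAntidiag univ N) fun x hx => if_neg (by simpa using hx)]
  exact sum_congr rfl fun x hx => if_pos (by simpa using hx)

theorem multinomialMean_prod_pow (N : ℕ) (p z : ι → ℝ) :
    multinomialMean N p (fun x => ∏ i, z i ^ x i) = (∑ i, p i * z i) ^ N := by
  rw [multinomialMean, sum_pow_eq_sum_piAntidiag]
  refine sum_congr rfl fun x hx => ?_
  have hfac := Nat.multinomial_spec univ x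
  rw [(mem_piAntidiag.1 hx).1] at hfac
  rw [← hfac, mul_assoc, ← prod_mul_distrib]
  push_cast
  rw [mul_div_cancel_left₀ _ (by positivity)]
  simp [mul_pow]

end Multinomial

theorem hasSum_mul_of_hasSum {α β : Type*} {f : α → ℝ} {g : β → ℝ} {s t : ℝ}
    (hf : HasSum f s) (hg : HasSum g t) :
    HasSum (fun q : α × β => f q.1 * g q.2) (s * t) :=
  hf.mul hg (summable_mul_of_summable_norm (summable_norm_iff.2 hf.summable)
    (summable_norm_iff.2 hg.summable))

section Krawtchouk

variable {ι κ : Type*} [Fintype ι] [Fintype κ]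

theorem sum_mul_one_add_mul_one_add [DecidableEq κ] {p : ι → ℝ} {a : κ → ℝ} {u : κ → ι → ℝ}
    (hpsum : ∑ j, p j = 1) (hu0 : ∀ k, ∑ j, u k j * p j = 0)
    (horth : ∀ k l, ∑ j, u k j * u l j * p j = if k = l then a k else 0) (w v : κ → ℝ) :
    ∑ j, p j * ((1 + ∑ l, w l * u l j) * (1 + ∑ l, v l * u l j))
      = 1 + ∑ l, a l * (w l * v l) := by
  have hlin : ∀ w : κ → ℝ, ∑ j, p j * ∑ l, w l * u l j = 0 := fun w => by
    simp_rw [mul_sum, mul_left_comm (p _)]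
    rw [sum_comm]
    refine sum_eq_zero fun l _ => ?_
    rw [← mul_sum]
    simp [mul_comm (p _), hu0]
  have hquad : ∑ j, p j * ((∑ l, w l * u l j) * ∑ l, v l * u l j)
      = ∑ l, a l * (w l * v l) := by
    simp_rw [sum_mul_sum, mul_sum]
    rw [sum_comm]
    refine sum_congr rfl fun k _ => ?_
    rw [sum_comm]
    have hterm : ∀ l, ∑ j, p j * (w k * u k j * (v l * u l j))
        = w k * v l * if k = l then a k else 0 := fun l => by
      rw [← horth, mul_sum]
      exact sum_congr rfl fun j _ => by ring
    rw [sum_congr rfl fun l _ => hterm l]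
    simp [mul_comm]
  calc ∑ j, p j * ((1 + ∑ l, w l * u l j) * (1 + ∑ l, v l * u l j))
      = ∑ j, p j + ∑ j, p j * ∑ l, w l * u l j + ∑ j, p j * ∑ l, v l * u l j
          + ∑ j, p j * ((∑ l, w l * u l j) * ∑ l, v l * u l j) := by
        simp only [← sum_add_distrib]
        exact sum_congr rfl fun j _ => by ring
    _ = 1 + ∑ l, a l * (w l * v l) := by rw [hpsum, hlin, hlin, hquad, add_zero, add_zero]

theorem hasSum_multinomialMean_mul_mul_prod_pow [DecidableEq ι] (N : ℕ) (p : ι → ℝ)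
    (u : κ → ι → ℝ) (Q : (κ → ℕ) → (ι → ℕ) → ℝ)
    (hgen : ∀ (x : ι → ℕ) (w : κ → ℝ),
      HasSum (fun n : κ → ℕ => Q n x * ∏ l, w l ^ n l) (∏ j, (1 + ∑ l, w l * u l j) ^ x j))
    (w v : κ → ℝ) :
    HasSum (fun q : (κ → ℕ) × (κ → ℕ) =>
        multinomialMean N p (fun x => Q q.1 x * Q q.2 x) * ((∏ l, w l ^ q.1 l) * ∏ l, v l ^ q.2 l))
      ((∑ j, p j * ((1 + ∑ l, w l * u l j) * (1 + ∑ l, v l * u l j))) ^ N) := by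
  rw [← multinomialMean_prod_pow]
  simp_rw [multinomialMean, sum_mul]
  refine hasSum_sum fun x _ => ?_
  simp only [mul_pow, prod_mul_distrib]
  exact ((hasSum_mul_of_hasSum (hgen x w) (hgen x v)).mul_left _).congr_fun fun q => by ring

variable [DecidableEq κ]

theorem mem_piAntidiag_univ_option {N : ℕ} {g : Option κ → ℕ} :
    g ∈ piAntidiag univ N ↔ g none + ∑ l, g (some l) = N := by
  simp [Fintype.sum_option]

theorem injOn_comp_some_piAntidiag (N : ℕ) :
    Set.InjOn (· ∘ some) (piAntidiag (univ : Finset (Option κ)) N : Set (Option κ → ℕ)) := by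
  intro g hg g' hg' hgg'
  have hsome : ∀ l, g (some l) = g' (some l) := congrFun hgg'
  have hsum := mem_piAntidiag_univ_option.1 hg
  have hsum' := mem_piAntidiag_univ_option.1 hg'
  simp only [hsome] at hsum
  funext o
  cases o with
  | none => omega
  | some l => exact hsome l

theorem hasSum_one_add_sum_pow (N : ℕ) (z : κ → ℝ) :
    HasSum (fun n : κ → ℕ => if ∑ l, n l ≤ N then
        (N.factorial : ℝ) / ((∏ l, (n l).factorial) * (N - ∑ l, n l).factorial) * ∏ l, z l ^ n l
      else 0) ((1 + ∑ l, z l) ^ N) := by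
  set F : (κ → ℕ) → ℝ := fun n => if ∑ l, n l ≤ N then
    (N.factorial : ℝ) / ((∏ l, (n l).factorial) * (N - ∑ l, n l).factorial) * ∏ l, z l ^ n l
      else 0 with hF
  -- The constant `1` is the variable indexed by `none`, whose exponent is `N - ∑ l, n l`.
  set S := (piAntidiag (univ : Finset (Option κ)) N).image (· ∘ some)
  have hS : ∀ n, ∑ l, n l ≤ N → n ∈ S := fun n hn => mem_image.2
    ⟨fun o => o.elim (N - ∑ l, n l) n, mem_piAntidiag_univ_option.2 (by simp; omega), rfl⟩
  suffices hval : ∑ n ∈ S, F n = (1 + ∑ l, z l) ^ N from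
    hval ▸ hasSum_sum_of_ne_finset_zero fun n hn => if_neg (mt (hS n) hn)
  rw [sum_image (injOn_comp_some_piAntidiag N),
    show 1 + ∑ l, z l = ∑ o : Option κ, o.elim 1 z by simp [Fintype.sum_option],
    sum_pow_eq_sum_piAntidiag]
  refine sum_congr rfl fun g hg => ?_
  have hsum := mem_piAntidiag_univ_option.1 hg
  have hfac := Nat.multinomial_spec univ g
  simp only [Fintype.prod_option, Fintype.sum_option, hsum] at hfac
  simp only [hF, Function.comp_apply, if_pos (show ∑ l, g (some l) ≤ N by omega),
    show N - ∑ l, g (some l) = g none by omega, Fintype.prod_option, Option.elim, one_pow, one_mul]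
  rw [← hfac]
  push_cast
  field_simp

theorem hasSum_one_add_sum_mul_mul_pow (N : ℕ) (a w v : κ → ℝ) :
    HasSum (fun q : (κ → ℕ) × (κ → ℕ) =>
      (if q.1 = q.2 ∧ ∑ l, q.2 l ≤ N then
        (N.factorial : ℝ) / ((∏ l, (q.2 l).factorial) * (N - ∑ l, q.2 l).factorial)
          * ∏ l, a l ^ q.2 l
      else 0) * ((∏ l, w l ^ q.1 l) * ∏ l, v l ^ q.2 l))
      ((1 + ∑ l, a l * (w l * v l)) ^ N) := by
  have hdiag : Function.Injective fun n : κ → ℕ => (n, n) := fun _ _ h => congrArg Prod.fst h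
  refine (hdiag.hasSum_iff ?_).1 ?_
  · rintro ⟨m, n⟩ hmn
    rw [if_neg, zero_mul]
    rintro ⟨hmn' : m = n, -⟩
    exact hmn ⟨m, hmn' ▸ rfl⟩
  · refine (hasSum_one_add_sum_pow N fun l => a l * (w l * v l)).congr_fun fun n => ?_
    simp only [Function.comp_apply, true_and, mul_pow, prod_mul_distrib]
    split_ifs <;> ring

end Krawtchouk

theorem multivariate_krawtchouk_orthogonality_general
    (d N : ℕ)
    (p : Fin d → ℝ) (a : Fin (d - 1) → ℝ) (u : Fin (d - 1) → Fin d → ℝ)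
    (hpsum : ∑ j, p j = 1)
    (hu0 : ∀ k, ∑ j, u k j * p j = 0)
    (horth : ∀ k l, ∑ j, u k j * u l j * p j = if k = l then a k else 0)
    (Q : (Fin (d - 1) → ℕ) → (Fin d → ℕ) → ℝ)
    (hgen : ∀ (x : Fin d → ℕ) (w : Fin (d - 1) → ℝ),
      HasSum (fun n : Fin (d - 1) → ℕ => Q n x * ∏ l, w l ^ n l)
        (∏ j, (1 + ∑ l, w l * u l j) ^ x j)) :
    ∀ m n : Fin (d - 1) → ℕ, (∑ l, m l) ≤ N → (∑ l, n l) ≤ N →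
      (∑' x : Fin d → ℕ,
          if (∑ i, x i) = N then
            (N.factorial : ℝ) / (∏ i, (x i).factorial) * (∏ i, p i ^ x i)
              * (Q m x * Q n x)
          else 0)
        = if m = n then
            (N.factorial : ℝ)
              / ((∏ l, (n l).factorial) * (N - ∑ l, n l).factorial)
              * ∏ l, a l ^ n l
          else 0 := by
  intro m n _ hn
  have hcoeff := eq_of_forall_hasSum_mul_prod_pow_mul_prod_pow
    (fun w v => sum_mul_one_add_mul_one_add hpsum hu0 horth w v ▸
      hasSum_multinomialMean_mul_mul_prod_pow N p u Q hgen w v)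
    (hasSum_one_add_sum_mul_mul_pow N a)
  rw [tsum_ite_sum_eq_eq_multinomialMean, congrFun hcoeff (m, n)]
  simp [hn]

/-- Orthogonality of the multivariate Krawtchouk polynomials `Q_n(x;u)`, defined as
the coefficients of `w_1^{n_1}⋯w_{d-1}^{n_{d-1}}` in
`Π_{j=1}^d (1 + Σ_{l=1}^{d-1} w_l u_j^{(l)})^{x_j}`, with respect to the
multinomial `(N,p)` distribution:
`E[Q_m Q_n] = δ_{mn} N!/(n_1!⋯n_{d-1}!(N-|n|)!) Π_l a_l^{n_l}` for `|m|,|n| ≤ N`. -/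
theorem multivariate_krawtchouk_orthogonality
    (d N : ℕ) (hd : 1 ≤ d)
    (p : Fin d → ℝ) (a : Fin (d - 1) → ℝ) (u : Fin (d - 1) → Fin d → ℝ)
    (hp : ∀ j, 0 < p j) (hpsum : ∑ j, p j = 1)
    (hu0 : ∀ k, ∑ j, u k j * p j = 0)
    (horth : ∀ k l, ∑ j, u k j * u l j * p j = if k = l then a k else 0)
    (Q : (Fin (d - 1) → ℕ) → (Fin d → ℕ) → ℝ)
    (hgen : ∀ (x : Fin d → ℕ) (w : Fin (d - 1) → ℝ),
      HasSum (fun n : Fin (d - 1) → ℕ => Q n x * ∏ l, w l ^ n l)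
        (∏ j, (1 + ∑ l, w l * u l j) ^ x j)) :
    ∀ m n : Fin (d - 1) → ℕ, (∑ l, m l) ≤ N → (∑ l, n l) ≤ N →
      (∑' x : Fin d → ℕ,
          if (∑ i, x i) = N then
            (N.factorial : ℝ) / (∏ i, (x i).factorial) * (∏ i, p i ^ x i)
              * (Q m x * Q n x)
          else 0)
        = if m = n then
            (N.factorial : ℝ)
              / ((∏ l, (n l).factorial) * (N - ∑ l, n l).factorial)
              * ∏ l, a l ^ n l
          else 0 :=
  multivariate_krawtchouk_orthogonality_general d N p a u hpsum hu0 horth Q hgen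
end

section
/- For X = (X_1,…,X_d) independent Poisson with means μ, the joint expectation of products of the Poisson-Charlier generating functions satisfies E[G_PC(X,z,u) G_PC(X,w,u)] = exp{|μ|^{-1} Σ_{j=0}^{d-1} a_j z_j w_j}, where G_PC(X,w,u) = e^{w_0} Π_{i=1}^d (1 - w_0/|μ| + |μ|^{-1} Σ_{j=1}^{d-1} u_i^{(j)} w_j)^{X_i}. -/
/-!
By independence the expectation factorises into one-dimensional Poisson generating functions
`E[c^X] = e^{m(c-1)}`, so the left side is `exp (z₀ + w₀ + ∑ᵢ μᵢ (Aᵢ Bᵢ - 1))` for the Charlier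
factors `Aᵢ, Bᵢ`. Since `u⁽⁰⁾ ≡ 1`, `Aᵢ = 1 + |μ|⁻¹ ∑ⱼ uᵢ⁽ʲ⁾ ζⱼ` where `ζ` is `z` with `z₀` negated,
and orthogonality under `p = μ / |μ|` evaluates the linear part of `∑ᵢ μᵢ (Aᵢ Bᵢ - 1)` to
`-z₀ - w₀` and the quadratic part (a Parseval identity) to `|μ|⁻¹ ∑ⱼ aⱼ zⱼ wⱼ`.
-/

open Finset Nat

section PiProd

variable {β R : Type*}

lemma prod_consEquiv [CommMonoid R] {n : ℕ} (g : Fin (n + 1) → β → R) (p : β × (Fin n → β)) :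
    ∏ i, g i (Fin.consEquiv (fun _ => β) p i) = g 0 p.1 * ∏ i, g i.succ (p.2 i) := by
  simp [Fin.consEquiv, Fin.prod_univ_succ]

lemma summable_pi_prod_of_nonneg {n : ℕ} (g : Fin n → β → ℝ) (hg₀ : ∀ i k, 0 ≤ g i k)
    (hg : ∀ i, Summable (g i)) : Summable fun x : Fin n → β => ∏ i, g i (x i) := by
  induction n with
  | zero => exact .of_finite
  | succ n ih =>
    have htail := ih (fun i => g i.succ) (fun i => hg₀ i.succ) (fun i => hg i.succ)
    refine (Fin.consEquiv (fun _ => β)).summable_iff.mp ?_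
    refine ((hg 0).mul_of_nonneg htail (hg₀ 0) fun _ => prod_nonneg fun i _ => hg₀ i.succ _).congr
      fun p => (prod_consEquiv g p).symm

lemma tsum_pi_prod [NormedCommRing R] [NormOneClass R] [CompleteSpace R] {n : ℕ}
    (f : Fin n → β → R) (hf : ∀ i, Summable fun k => ‖f i k‖) :
    ∑' x : Fin n → β, ∏ i, f i (x i) = ∏ i, ∑' k, f i k := by
  induction n with
  | zero => simp
  | succ n ih =>
    have htail : Summable fun y : Fin n → β => ‖∏ i, f i.succ (y i)‖ :=
      (summable_pi_prod_of_nonneg _ (fun _ _ => norm_nonneg _) fun i => hf i.succ).of_nonneg_of_le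
        (fun _ => norm_nonneg _) fun _ => norm_prod_le _ _
    rw [← (Fin.consEquiv (fun _ => β)).tsum_eq]
    simp only [prod_consEquiv]
    rw [← tsum_mul_tsum_of_summable_norm (f := f 0) (hf 0) htail, ih _ fun i => hf i.succ,
      Fin.prod_univ_succ]

end PiProd

section Poisson

lemma summable_norm_poisson_mul_pow (m c : ℝ) :
    Summable fun n : ℕ => ‖Real.exp (-m) * m ^ n / n ! * c ^ n‖ := by
  refine ((Real.summable_pow_div_factorial |m * c|).mul_left (Real.exp (-m))).congr fun n => ?_
  simp only [Real.norm_eq_abs, abs_mul, abs_div, abs_pow, Real.abs_exp, Nat.abs_cast, mul_pow]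
  ring

lemma tsum_poisson_mul_pow (m c : ℝ) :
    ∑' n : ℕ, Real.exp (-m) * m ^ n / n ! * c ^ n = Real.exp (m * (c - 1)) := by
  have hexp := (NormedSpace.expSeries_div_hasSum_exp (m * c)).mul_left (Real.exp (-m))
  rw [← Real.exp_eq_exp_ℝ, ← Real.exp_add] at hexp
  convert hexp.tsum_eq using 1
  · exact tsum_congr fun n => by rw [mul_pow]; ring
  · ring_nf

lemma tsum_pi_poisson_mul_prod_pow {d : ℕ} (μ c : Fin d → ℝ) :
    ∑' x : Fin d → ℕ, (∏ i, Real.exp (-μ i) * μ i ^ x i / (x i)!) * ∏ i, c i ^ x i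
      = Real.exp (∑ i, μ i * (c i - 1)) := by
  simp only [← prod_mul_distrib]
  rw [tsum_pi_prod _ fun i => summable_norm_poisson_mul_pow (μ i) (c i), Real.exp_sum]
  exact prod_congr rfl fun i _ => tsum_poisson_mul_pow (μ i) (c i)

lemma tsum_poisson_mul_exp_prod_pow_mul_exp_prod_pow {d : ℕ} (μ A B : Fin d → ℝ) (c₁ c₂ : ℝ) :
    ∑' x : Fin d → ℕ, (∏ i, Real.exp (-μ i) * μ i ^ x i / (x i)!)
        * (Real.exp c₁ * ∏ i, A i ^ x i) * (Real.exp c₂ * ∏ i, B i ^ x i)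
      = Real.exp (c₁ + c₂ + ∑ i, μ i * (A i * B i - 1)) := by
  have hterm (x : Fin d → ℕ) :
      (∏ i, Real.exp (-μ i) * μ i ^ x i / (x i)!)
          * (Real.exp c₁ * ∏ i, A i ^ x i) * (Real.exp c₂ * ∏ i, B i ^ x i)
        = Real.exp (c₁ + c₂) * ((∏ i, Real.exp (-μ i) * μ i ^ x i / (x i)!)
          * ∏ i, (A i * B i) ^ x i) := by
    simp only [Real.exp_add, mul_pow, prod_mul_distrib]
    ring
  rw [tsum_congr hterm, tsum_mul_left, tsum_pi_poisson_mul_prod_pow, ← Real.exp_add]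

end Poisson

section Orthogonal

variable {ι κ R : Type*} [Fintype ι] [Fintype κ] [DecidableEq κ]
  {p : ι → R} {g : κ → R} {u : κ → ι → R}

lemma sum_mul_sum_mul_sum_of_orthogonal [CommSemiring R]
    (horth : ∀ k l, ∑ i, u k i * u l i * p i = if k = l then g k else 0)
    (c e : κ → R) :
    ∑ i, p i * ((∑ k, u k i * c k) * ∑ l, u l i * e l) = ∑ k, g k * c k * e k := by
  calc ∑ i, p i * ((∑ k, u k i * c k) * ∑ l, u l i * e l)
      = ∑ i, ∑ k, ∑ l, c k * e l * (u k i * u l i * p i) := by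
        refine sum_congr rfl fun i _ => ?_
        rw [sum_mul_sum, mul_sum]
        exact sum_congr rfl fun k _ => by rw [mul_sum]; exact sum_congr rfl fun l _ => by ring
    _ = ∑ k, ∑ l, c k * e l * ∑ i, u k i * u l i * p i := by
        rw [sum_comm]
        refine sum_congr rfl fun k _ => ?_
        rw [sum_comm]
        exact sum_congr rfl fun l _ => (mul_sum _ _ _).symm
    _ = ∑ k, g k * c k * e k := by
        simp only [horth, mul_ite, mul_zero, sum_ite_eq, mem_univ, if_true]
        exact sum_congr rfl fun k _ => by ring

lemma sum_mul_sum_of_orthogonal [CommSemiring R]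
    (horth : ∀ k l, ∑ i, u k i * u l i * p i = if k = l then g k else 0)
    (k₀ : κ) (hu : ∀ i, u k₀ i = 1) (c : κ → R) :
    ∑ i, p i * ∑ k, u k i * c k = g k₀ * c k₀ := by
  simpa [hu, Pi.single_apply] using sum_mul_sum_mul_sum_of_orthogonal horth c (Pi.single k₀ 1)

lemma sum_mul_one_add_mul_one_add_sub_one_of_orthogonal [CommRing R]
    (horth : ∀ k l, ∑ i, u k i * u l i * p i = if k = l then g k else 0)
    (k₀ : κ) (hu : ∀ i, u k₀ i = 1) (hg : g k₀ = 1) (t : R) (c e : κ → R) :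
    ∑ i, p i * ((1 + t * ∑ k, u k i * c k) * (1 + t * ∑ l, u l i * e l) - 1)
      = t * (c k₀ + e k₀) + t ^ 2 * ∑ k, g k * c k * e k := by
  have hexpand : ∀ i, p i * ((1 + t * ∑ k, u k i * c k) * (1 + t * ∑ l, u l i * e l) - 1)
      = t * (p i * ∑ k, u k i * c k) + t * (p i * ∑ l, u l i * e l)
        + t ^ 2 * (p i * ((∑ k, u k i * c k) * ∑ l, u l i * e l)) := fun i => by ring
  simp only [hexpand, sum_add_distrib, ← mul_sum, sum_mul_sum_of_orthogonal horth k₀ hu,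
    sum_mul_sum_mul_sum_of_orthogonal horth, hg]
  ring

end Orthogonal

lemma sum_mul_update_neg {κ R : Type*} [Fintype κ] [DecidableEq κ] [CommRing R]
    (v z : κ → R) (j₀ : κ) (hv : v j₀ = 1) :
    ∑ j, v j * Function.update z j₀ (-z j₀) j = -z j₀ + ∑ j ∈ univ.erase j₀, v j * z j := by
  rw [← add_sum_erase _ _ (mem_univ j₀), Function.update_self, hv, one_mul]
  congr 1
  exact sum_congr rfl fun j hj => by rw [Function.update_of_ne (ne_of_mem_erase hj)]

theorem poisson_charlier_generating_function_expectation_general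
    (d : ℕ) [NeZero d] (μ : Fin d → ℝ)
    (a : Fin d → ℝ) (u : Fin d → Fin d → ℝ)
    (hu0 : ∀ i, u 0 i = 1) (ha0 : a 0 = 1)
    (horth : ∀ k l, ∑ i, u k i * u l i * (μ i / ∑ i', μ i') = if k = l then a k else 0) :
    ∀ z w : Fin d → ℝ,
      (∑' x : Fin d → ℕ,
          (∏ i, Real.exp (-μ i) * μ i ^ x i / (x i).factorial)
            * (Real.exp (z 0) * ∏ i,
                (1 - z 0 / (∑ i', μ i')
                  + (∑ i', μ i')⁻¹ * ∑ j ∈ Finset.univ.erase 0, u j i * z j) ^ x i)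
            * (Real.exp (w 0) * ∏ i,
                (1 - w 0 / (∑ i', μ i')
                  + (∑ i', μ i')⁻¹ * ∑ j ∈ Finset.univ.erase 0, u j i * w j) ^ x i))
        = Real.exp ((∑ i', μ i')⁻¹ * ∑ j, a j * z j * w j) := by
  intro z w
  set s := ∑ i', μ i'
  -- `horth 0 0` says `∑ i, μ i / s = 1`, which fails for `s = 0` since then `μ i / s = 0`
  have hs : s ≠ 0 := fun hs => by simpa [hu0, ha0, hs] using horth 0 0
  set flip0 : (Fin d → ℝ) → Fin d → ℝ := fun v => Function.update v 0 (-v 0)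
  have hfactor (v : Fin d → ℝ) (i : Fin d) :
      1 - v 0 / s + s⁻¹ * ∑ j ∈ univ.erase 0, u j i * v j = 1 + s⁻¹ * ∑ j, u j i * flip0 v j := by
    rw [sum_mul_update_neg (u · i) v 0 (hu0 i)]
    ring
  have hflip (j : Fin d) : a j * flip0 z j * flip0 w j = a j * z j * w j := by
    rcases eq_or_ne j 0 with rfl | hj <;> simp [flip0, *]
  have hweights (X : Fin d → ℝ) : ∑ i, μ i * X i = s * ∑ i, μ i / s * X i := by
    rw [mul_sum]
    exact sum_congr rfl fun i _ => by field_simp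
  simp only [hfactor]
  rw [tsum_poisson_mul_exp_prod_pow_mul_exp_prod_pow, hweights,
    sum_mul_one_add_mul_one_add_sub_one_of_orthogonal horth 0 hu0 ha0]
  simp only [hflip, flip0, Function.update_self]
  congr 1
  field_simp
  ring

/-- For `X = (X_1,…,X_d)` independent Poisson with means `μ`, the joint expectation
of products of the Poisson-Charlier generating functions
`G_PC(x,w,u) = e^{w_0} Π_i (1 - w_0/|μ| + |μ|⁻¹ Σ_{j≥1} u_i^{(j)} w_j)^{x_i}`
satisfies `E[G_PC(X,z,u) G_PC(X,w,u)] = exp{|μ|⁻¹ Σ_j a_j z_j w_j}`. -/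
theorem poisson_charlier_generating_function_expectation
    (d : ℕ) [NeZero d] (μ : Fin d → ℝ) (hμ : ∀ i, 0 < μ i)
    (a : Fin d → ℝ) (u : Fin d → Fin d → ℝ)
    (hu0 : ∀ i, u 0 i = 1) (ha0 : a 0 = 1)
    (horth : ∀ k l, ∑ i, u k i * u l i * (μ i / ∑ i', μ i') = if k = l then a k else 0) :
    ∀ z w : Fin d → ℝ,
      (∑' x : Fin d → ℕ,
          (∏ i, Real.exp (-μ i) * μ i ^ x i / (x i).factorial)
            * (Real.exp (z 0) * ∏ i,
                (1 - z 0 / (∑ i', μ i')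
                  + (∑ i', μ i')⁻¹ * ∑ j ∈ Finset.univ.erase 0, u j i * z j) ^ x i)
            * (Real.exp (w 0) * ∏ i,
                (1 - w 0 / (∑ i', μ i')
                  + (∑ i', μ i')⁻¹ * ∑ j ∈ Finset.univ.erase 0, u j i * w j) ^ x i))
        = Real.exp ((∑ i', μ i')⁻¹ * ∑ j, a j * z j * w j) :=
  poisson_charlier_generating_function_expectation_general d μ a u hu0 ha0 horth
end

section
/- The multivariate Poisson-Charlier polynomial factorizes as C_n(X;μ,u) = (n_0!)^{-1} C_{n_0}(|X| - |n_1|; |μ|) |μ|^{-|n_1|} Q_{n_1}(X; |X|, p, u), where C_{n_0} is a 1-dimensional Poisson-Charlier polynomial and Q_{n_1} is a multivariate Krawtchouk polynomial with N = |X|. -/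
/-!
Put `S = |μ|` and, for `j ≥ 1`, `w_j = (S - w₀) v_j`. Since
`1 - w₀/S + S⁻¹ Σ_j u_i^{(j)} w_j = (1 - w₀/S)(1 + Σ_j u_i^{(j)} v_j)`, the generating function of
`C_n(x)` becomes `e^{w₀} (1 - w₀/S)^{|x|} ∏_i (1 + Σ_j u_i^{(j)} v_j)^{x_i}`, and the last product is
the generating function `Σ_m Q_m(x) v^m` of the Krawtchouk polynomials, a finite sum. Writing
`v^m = (S - w₀)^{-|m|} w^m = (1 - w₀/S)^{-|m|} S^{-|m|} w^m`, each term carries the factor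
`e^{w₀} (1 - w₀/S)^{|x| - |m|}`, the Poisson–Charlier generating function at `y = |x| - |m|`.
Expanding it gives a power series in `w` whose coefficients are the right-hand side, and
coefficients of a power series converging on a polydisc are unique.
-/

open Finset Filter Topology

open FormalMultilinearSeries in
theorem eq_zero_of_hasSum_mul_pow_zero {a : ℕ → ℝ} {ε : ℝ} (hε : 0 < ε)
    (h : ∀ z : ℝ, |z| < ε → HasSum (fun k => a k * z ^ k) 0) (k : ℕ) : a k = 0 := by
  set p := ofScalars ℝ a
  have hr : 0 < ε / 2 := half_pos hε
  have hsum : Summable fun k => ‖p k‖ * ((ε / 2).toNNReal : ℝ) ^ k := by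
    have := (h (ε / 2) (by rw [abs_of_pos hr]; linarith)).summable.abs
    simpa [p, abs_mul, abs_of_pos hr, Real.coe_toNNReal _ hr.le] using this
  have hrad : 0 < p.radius :=
    lt_of_lt_of_le (by simpa using hr) (p.le_radius_of_summable hsum)
  have hzero : p.sum =ᶠ[𝓝 0] 0 := by
    filter_upwards [Metric.ball_mem_nhds (0 : ℝ) hε] with z hz
    rw [mem_ball_zero_iff, Real.norm_eq_abs] at hz
    simpa [FormalMultilinearSeries.sum, p, ofScalars_apply_eq, mul_comm] using (h z hz).tsum_eq
  have hp := (p.hasFPowerSeriesOnBall hrad).hasFPowerSeriesAt.eq_zero_of_eventually hzero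
  exact (ofScalars_eq_zero ℝ k).mp (congrArg (· k) hp)

theorem hasSum_mul_prod_pow_cons_iff {d : ℕ} {c : (Fin (d + 1) → ℕ) → ℝ} {s : ℝ}
    (z : ℝ) (w : Fin d → ℝ) :
    HasSum (fun n => c n * ∏ j, (Fin.cons z w : Fin (d + 1) → ℝ) j ^ n j) s ↔
      HasSum (fun p : ℕ × (Fin d → ℕ) => z ^ p.1 * (c (Fin.cons p.1 p.2) * ∏ j, w j ^ p.2 j))
        s := by
  rw [← (Fin.consEquiv fun _ => ℕ).hasSum_iff]
  refine iff_of_eq (congrArg (HasSum · s) (funext fun p => ?_))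
  simp [Fin.consEquiv, Fin.prod_univ_succ]
  ring

theorem eq_zero_of_hasSum_mul_prod_pow_zero {d : ℕ} {c : (Fin d → ℕ) → ℝ} {ε : ℝ}
    (hε : 0 < ε)
    (h : ∀ w : Fin d → ℝ, (∀ j, |w j| < ε) → HasSum (fun n => c n * ∏ j, w j ^ n j) 0)
    (n : Fin d → ℕ) : c n = 0 := by
  induction d with
  | zero =>
    have h0 := ((h Fin.elim0 fun j => j.elim0).unique (hasSum_fintype _)).symm
    simp only [univ_eq_empty, prod_empty, mul_one, Fintype.sum_unique] at h0
    convert h0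
  | succ d ih =>
    suffices ∀ k m, c (Fin.cons k m) = 0 by simpa using this (n 0) (Fin.tail n)
    intro k
    refine ih fun w hw => ?_
    have hcons : ∀ z, |z| < ε → HasSum (fun p : ℕ × (Fin d → ℕ) =>
        z ^ p.1 * (c (Fin.cons p.1 p.2) * ∏ j, w j ^ p.2 j)) 0 := fun z hz =>
      (hasSum_mul_prod_pow_cons_iff z w).mp (h _ (Fin.cases hz hw))
    have hr : 0 < ε / 2 := half_pos hε
    have hfiber (k : ℕ) : Summable fun m : Fin d → ℕ => c (Fin.cons k m) * ∏ j, w j ^ m j :=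
      (summable_mul_left_iff (pow_ne_zero k hr.ne')).mp
        ((hcons (ε / 2) (by rw [abs_of_pos hr]; linarith)).summable.prod_factor k)
    have hA := eq_zero_of_hasSum_mul_pow_zero hε fun z hz =>
      ((hcons z hz).prod_fiberwise fun k => (hfiber k).hasSum.mul_left (z ^ k)).congr_fun
        fun k => mul_comm _ _
    simpa [hA k] using (hfiber k).hasSum

theorem eq_of_hasSum_mul_prod_pow {d : ℕ} {c c' : (Fin d → ℕ) → ℝ} {f : (Fin d → ℝ) → ℝ}
    {ε : ℝ} (hε : 0 < ε)
    (hc : ∀ w : Fin d → ℝ, (∀ j, |w j| < ε) → HasSum (fun n => c n * ∏ j, w j ^ n j) (f w))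
    (hc' : ∀ w : Fin d → ℝ, (∀ j, |w j| < ε) → HasSum (fun n => c' n * ∏ j, w j ^ n j) (f w)) :
    c = c' :=
  funext fun n => sub_eq_zero.mp <| eq_zero_of_hasSum_mul_prod_pow_zero (c := c - c') hε
    (fun w hw => by simpa [sub_mul] using (hc w hw).sub (hc' w hw)) n

theorem hasSum_mul_prod_pow_cons_zero {d : ℕ} {c : (Fin (d + 1) → ℕ) → ℝ} {s : ℝ}
    (w : Fin d → ℝ) (h : HasSum (fun n => c n * ∏ j, (Fin.cons 0 w : Fin (d + 1) → ℝ) j ^ n j) s) :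
    HasSum (fun m => c (Fin.cons 0 m) * ∏ j, w j ^ m j) s := by
  rw [hasSum_mul_prod_pow_cons_iff] at h
  refine (((Prod.mk_right_injective (0 : ℕ)).hasSum_iff fun p hp => ?_).mpr h).congr_fun
    fun m => by simp
  have hp0 : p.1 ≠ 0 := fun h0 => hp ⟨p.2, Prod.ext h0.symm rfl⟩
  simp [zero_pow hp0]

@[to_additive]
theorem Fin.prod_univ_erase_zero {M : Type*} [CommMonoid M] {d : ℕ} (f : Fin (d + 1) → M) :
    ∏ l ∈ univ.erase 0, f l = ∏ j : Fin d, f j.succ := by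
  rw [Fin.univ_succ, erase_cons, prod_map]
  rfl

theorem MvPolynomial.hasSum_coeff_mul_prod_pow {σ R : Type*} [Fintype σ] [CommSemiring R]
    [TopologicalSpace R] (P : MvPolynomial σ R) (v : σ → R) :
    HasSum (fun n : σ → ℕ => coeff (Finsupp.equivFunOnFinite.symm n) P * ∏ i, v i ^ n i)
      (eval v P) := by
  have hfin := hasSum_sum_of_ne_finset_zero
    (s := P.support.map Finsupp.equivFunOnFinite.toEmbedding)
    (f := fun n : σ → ℕ => coeff (Finsupp.equivFunOnFinite.symm n) P * ∏ i, v i ^ n i)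
    (L := SummationFilter.unconditional _)
    fun n hn => by rw [notMem_support_iff.mp fun h => hn (mem_map_equiv.mpr h), zero_mul]
  simpa [eval_eq'] using hfin

theorem MvPolynomial.finite_support_coeff {σ R : Type*} [Finite σ] [CommSemiring R]
    (P : MvPolynomial σ R) :
    (Function.support fun n : σ → ℕ => coeff (Finsupp.equivFunOnFinite.symm n) P).Finite :=
  (P.support.finite_toSet.image Finsupp.equivFunOnFinite).subset fun n hn =>
    ⟨_, mem_support_iff.mpr hn, Finsupp.equivFunOnFinite.apply_symm_apply n⟩

theorem hasSum_prod_of_fiberwise_of_ne_finset_zero {α β M : Type*} [AddCommMonoid M]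
    [TopologicalSpace M] [ContinuousAdd M] {f : α × β → M} {g : β → M} (s : Finset β)
    (hf : ∀ p : α × β, p.2 ∉ s → f p = 0) (hg : ∀ b ∈ s, HasSum (fun a => f (a, b)) (g b)) :
    HasSum f (∑ b ∈ s, g b) := by
  classical
  have hfiber (b : β) (hb : b ∈ s) :
      HasSum (fun p : α × β => if p.2 = b then f p else 0) (g b) := by
    refine ((Prod.mk_left_injective b).hasSum_iff fun p hp => if_neg fun h => ?_).mp ?_
    · exact hp ⟨p.1, Prod.ext rfl h.symm⟩
    · exact (hg b hb).congr_fun fun a => if_pos rfl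
  refine (hasSum_sum hfiber).congr_fun fun p => ?_
  by_cases hp : p.2 ∈ s <;> simp [hp, hf]

theorem one_sub_div_rpow_sub_mul_rpow_neg {S z : ℝ} (hS : 0 < S) (hz : z < S) (X : ℝ) (M : ℕ) :
    (1 - z / S) ^ (X - M) * S ^ (-(M : ℝ)) = (1 - z / S) ^ X * (S - z)⁻¹ ^ M := by
  have hzS : 0 < 1 - z / S := by rw [sub_pos, div_lt_one hS]; exact hz
  rw [Real.rpow_sub hzS, Real.rpow_neg hS.le, Real.rpow_natCast, Real.rpow_natCast, div_eq_mul_inv,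
    mul_assoc, ← mul_inv, ← mul_pow, inv_pow]
  congr 3
  field_simp

theorem prod_div_pow_eq_inv_pow_mul_prod {d : ℕ} (w : Fin d → ℝ) (c : ℝ) (m : Fin d → ℕ) :
    ∏ j, (w j / c) ^ m j = c⁻¹ ^ (∑ j, m j) * ∏ j, w j ^ m j := by
  simp_rw [div_eq_mul_inv, mul_pow, prod_mul_distrib, prod_pow_eq_pow_sum, mul_comm]

theorem prod_one_sub_div_add_pow {ι : Type*} [Fintype ι] {S z : ℝ} (hS : 0 < S) (hz : z < S)
    (t : ι → ℝ) (x : ι → ℕ) :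
    ∏ i, (1 - z / S + S⁻¹ * t i) ^ x i =
      (1 - z / S) ^ (∑ i, (x i : ℝ)) * ∏ i, (1 + t i / (S - z)) ^ x i := by
  have hSz : S - z ≠ 0 := (sub_pos.mpr hz).ne'
  rw [← Nat.cast_sum, Real.rpow_natCast, ← prod_pow_eq_pow_sum, ← prod_mul_distrib]
  refine prod_congr rfl fun i _ => ?_
  rw [← mul_pow]
  congr 1
  field_simp

theorem hasSum_poissonCharlier_mul {d : ℕ} {S z X K : ℝ} (hS : 0 < S) (hz : z < S)
    {C1 : ℕ → ℝ → ℝ}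
    (hC1 : ∀ y, HasSum (fun k => C1 k y * z ^ k / k.factorial) (Real.exp z * (1 - z / S) ^ y))
    {q : (Fin d → ℕ) → ℝ} (hq : (Function.support q).Finite) (w : Fin d → ℝ)
    (hK : HasSum (fun m => q m * ∏ j, (w j / (S - z)) ^ m j) K) :
    HasSum (fun p : ℕ × (Fin d → ℕ) => z ^ p.1 *
        ((p.1.factorial : ℝ)⁻¹ * C1 p.1 (X - ∑ j, (p.2 j : ℝ)) * S ^ (-∑ j, (p.2 j : ℝ))
          * q p.2 * ∏ j, w j ^ p.2 j))
      (Real.exp z * (1 - z / S) ^ X * K) := by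
  have hfiber (m : Fin d → ℕ) : HasSum (fun k => z ^ k *
      ((k.factorial : ℝ)⁻¹ * C1 k (X - ∑ j, (m j : ℝ)) * S ^ (-∑ j, (m j : ℝ))
        * q m * ∏ j, w j ^ m j))
      (Real.exp z * (1 - z / S) ^ X * (q m * ∏ j, (w j / (S - z)) ^ m j)) := by
    have hM : ∑ j, (m j : ℝ) = ((∑ j, m j : ℕ) : ℝ) := by push_cast; rfl
    have hval : Real.exp z * (1 - z / S) ^ X * (q m * ∏ j, (w j / (S - z)) ^ m j) =
        Real.exp z * (1 - z / S) ^ (X - ∑ j, (m j : ℝ))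
          * (S ^ (-∑ j, (m j : ℝ)) * q m * ∏ j, w j ^ m j) := by
      rw [hM, prod_div_pow_eq_inv_pow_mul_prod]
      linear_combination (Real.exp z * q m * ∏ j, w j ^ m j) *
        (one_sub_div_rpow_sub_mul_rpow_neg hS hz X (∑ j, m j)).symm
    rw [hval]
    exact ((hC1 _).mul_right _).congr_fun fun k => by ring
  have hsupp : ∀ m ∉ hq.toFinset, q m * ∏ j, (w j / (S - z)) ^ m j = 0 := fun m hm => by
    simp_all
  rw [hK.unique (hasSum_sum_of_ne_finset_zero hsupp), mul_sum]
  exact hasSum_prod_of_fiberwise_of_ne_finset_zero _ (fun p hp => by simp_all) fun m _ => hfiber m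

theorem multivariate_poisson_charlier_factorization_general
    (d : ℕ) [NeZero d] (μ : Fin d → ℝ) (hμ : ∀ i, 0 < μ i)
    (u : Fin d → Fin d → ℝ)
    -- the multivariate Poisson-Charlier polynomials
    (C : (Fin d → ℕ) → (Fin d → ℕ) → ℝ)
    (hgenC : ∀ (x : Fin d → ℕ) (w : Fin d → ℝ),
      HasSum (fun n : Fin d → ℕ => C n x * ∏ j, w j ^ n j)
        (Real.exp (w 0) * ∏ i,
          (1 - w 0 / (∑ i', μ i')
            + (∑ i', μ i')⁻¹ * ∑ j ∈ Finset.univ.erase 0, u j i * w j) ^ x i))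
    -- the 1-dimensional Poisson-Charlier polynomials `C_m(y;|μ|)` (polynomial in a
    -- real argument `y`)
    (C1 : ℕ → ℝ → ℝ)
    (hgenC1 : ∀ (y : ℝ) (z : ℝ), |z| < ∑ i', μ i' →
      HasSum (fun m : ℕ => C1 m y * z ^ m / m.factorial)
        (Real.exp z * (1 - z / ∑ i', μ i') ^ y))
    -- the multivariate Krawtchouk polynomials with `N = |x|`
    (Q : (Fin d → ℕ) → (Fin d → ℕ) → ℝ)
    (hgenQ : ∀ (x : Fin d → ℕ) (w : Fin d → ℝ),
      HasSum (fun n : Fin d → ℕ => Q n x * ∏ l, w l ^ n l)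
        (∏ i, (1 + ∑ l ∈ Finset.univ.erase 0, w l * u l i) ^ x i)) :
    ∀ (n : Fin d → ℕ) (x : Fin d → ℕ),
      C n x
        = ((n 0).factorial : ℝ)⁻¹
            * C1 (n 0) ((∑ i, x i : ℝ) - (∑ l ∈ Finset.univ.erase 0, n l : ℝ))
            * (∑ i', μ i') ^ (-(∑ l ∈ Finset.univ.erase 0, n l : ℝ))
            * Q (Function.update n 0 0) x := by
  intro n x
  revert n
  obtain ⟨d, rfl⟩ := Nat.exists_eq_add_one_of_ne_zero (NeZero.ne d)
  set S := ∑ i', μ i'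
  have hS : 0 < S := sum_pos (fun i _ => hμ i) univ_nonempty
  let P : MvPolynomial (Fin (d + 1)) ℝ :=
    ∏ i, (1 + ∑ l ∈ univ.erase 0, MvPolynomial.X l * MvPolynomial.C (u l i)) ^ x i
  have hQ : (fun n => Q n x) = fun n => P.coeff (Finsupp.equivFunOnFinite.symm n) :=
    eq_of_hasSum_mul_prod_pow one_pos (fun w _ => hgenQ x w)
      fun w _ => by simpa [P, MvPolynomial.eval_prod] using P.hasSum_coeff_mul_prod_pow w
  have hQfin : (Function.support fun m => Q (Fin.cons 0 m) x).Finite :=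
    (hQ ▸ P.finite_support_coeff).preimage (Fin.cons_right_injective 0).injOn
  refine funext_iff.mp (eq_of_hasSum_mul_prod_pow hS (fun w _ => hgenC x w) fun w hw => ?_)
  obtain ⟨z, w, rfl⟩ : ∃ (z : ℝ) (w' : Fin d → ℝ), w = Fin.cons z w' :=
    ⟨_, _, (Fin.cons_self_tail w).symm⟩
  have hz : |z| < S := hw 0
  have hzS : z < S := lt_of_abs_lt hz
  have hK := hasSum_mul_prod_pow_cons_zero _ (hgenQ x (Fin.cons 0 fun j => w j / (S - z)))
  rw [hasSum_mul_prod_pow_cons_iff]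
  simp only [Fin.cons_zero, Fin.sum_univ_erase_zero, Fin.cons_succ, Fin.update_cons_zero] at hK ⊢
  rw [prod_one_sub_div_add_pow hS hzS, ← mul_assoc]
  convert hasSum_poissonCharlier_mul hS hzS (hgenC1 · z hz) hQfin w hK using 4
  rw [sum_div]
  exact congrArg _ (sum_congr rfl fun j _ => by ring)

/-- Factorization of the multivariate Poisson-Charlier polynomials:
`C_n(X;μ,u) = (n_0!)⁻¹ C_{n_0}(|X| - |n_1|; |μ|) |μ|^{-|n_1|} Q_{n_1}(X;|X|,p,u)`,
where `C_{n_0}(·;|μ|)` is the 1-dimensional Poisson-Charlier polynomial and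
`Q_{n_1}` is the multivariate Krawtchouk polynomial. -/
theorem multivariate_poisson_charlier_factorization
    (d : ℕ) [NeZero d] (μ : Fin d → ℝ) (hμ : ∀ i, 0 < μ i)
    (a : Fin d → ℝ) (u : Fin d → Fin d → ℝ)
    (hu0 : ∀ i, u 0 i = 1) (ha0 : a 0 = 1)
    (horth : ∀ k l, ∑ i, u k i * u l i * (μ i / ∑ i', μ i') = if k = l then a k else 0)
    -- the multivariate Poisson-Charlier polynomials
    (C : (Fin d → ℕ) → (Fin d → ℕ) → ℝ)
    (hgenC : ∀ (x : Fin d → ℕ) (w : Fin d → ℝ),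
      HasSum (fun n : Fin d → ℕ => C n x * ∏ j, w j ^ n j)
        (Real.exp (w 0) * ∏ i,
          (1 - w 0 / (∑ i', μ i')
            + (∑ i', μ i')⁻¹ * ∑ j ∈ Finset.univ.erase 0, u j i * w j) ^ x i))
    -- the 1-dimensional Poisson-Charlier polynomials `C_m(y;|μ|)` (polynomial in a
    -- real argument `y`)
    (C1 : ℕ → ℝ → ℝ)
    (hgenC1 : ∀ (y : ℝ) (z : ℝ), |z| < ∑ i', μ i' →
      HasSum (fun m : ℕ => C1 m y * z ^ m / m.factorial)
        (Real.exp z * (1 - z / ∑ i', μ i') ^ y))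
    -- the multivariate Krawtchouk polynomials with `N = |x|`
    (Q : (Fin d → ℕ) → (Fin d → ℕ) → ℝ)
    (hgenQ : ∀ (x : Fin d → ℕ) (w : Fin d → ℝ),
      HasSum (fun n : Fin d → ℕ => Q n x * ∏ l, w l ^ n l)
        (∏ i, (1 + ∑ l ∈ Finset.univ.erase 0, w l * u l i) ^ x i)) :
    ∀ (n : Fin d → ℕ) (x : Fin d → ℕ),
      C n x
        = ((n 0).factorial : ℝ)⁻¹
            * C1 (n 0) ((∑ i, x i : ℝ) - (∑ l ∈ Finset.univ.erase 0, n l : ℝ))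
            * (∑ i', μ i') ^ (-(∑ l ∈ Finset.univ.erase 0, n l : ℝ))
            * Q (Function.update n 0 0) x :=
  multivariate_poisson_charlier_factorization_general d μ hμ u C hgenC C1 hgenC1 Q hgenQ
end

section
/- The multivariate Hermite polynomials H_n(X;τ,u) := Π_{j=0}^{d-1} H_{n_j}(\hat{X}_j; |τ| a_j) satisfy E[H_m(X;τ,u) H_n(X;τ,u)] = δ_{mn} |τ|^{|n|} Π_{j=0}^{d-1} a_j^{n_j} n_j!, where X has independent N(0,τ_i) components and \hat{X}_j = Σ_i u_i^{(j)} X_i. -/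
/-!
The generating function `exp (y z - v z² / 2)` of the Hermite polynomials `H_n(·; v)` satisfies
`E[exp (Y s - v s²/2) exp (Y t - v t²/2)] = exp (v s t)` for `Y ~ N(0, v)`; comparing coefficients
of `s^m t^n` gives the one-dimensional orthogonality `E[H_m(Y) H_n(Y)] = δ_{mn} v^n n!`.
The linear forms `\hat X_j = Σ_i u_i^{(j)} X_i` are jointly Gaussian with covariance
`Σ_i u_i^{(k)} u_i^{(l)} τ_i = δ_{kl} |τ| a_k`, so being uncorrelated they are independent
`N(0, |τ| a_j)` variables, and the multivariate expectation factors into one-dimensional ones.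
-/

open MeasureTheory ProbabilityTheory Finset Real Nat
open scoped NNReal

/-- `H_n(y; v)` in closed form: `n!` times the coefficient of `z^n` in `e^{yz} e^{-vz²/2}`. -/
noncomputable def hermiteVar (n : ℕ) (v y : ℝ) : ℝ :=
  n ! * ∑ k ∈ range (n / 2 + 1), y ^ (n - 2 * k) / (n - 2 * k)! * ((-v / 2) ^ k / k !)

lemma hasSum_pow_div_factorial (x : ℝ) : HasSum (fun n => x ^ n / n !) (exp x) := by
  rw [exp_eq_exp_ℝ]
  exact NormedSpace.expSeries_div_hasSum_exp x

theorem hasSum_hermiteVar (v y z : ℝ) :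
    HasSum (fun n => hermiteVar n v y * z ^ n / n !) (exp (y * z - v * z ^ 2 / 2)) := by
  have hexp : ∀ x : ℝ, Summable fun n => ‖x ^ n / (n ! : ℝ)‖ :=
    fun x => (hasSum_pow_div_factorial x).summable.norm
  have hprod : HasSum
      (fun p : ℕ × ℕ => (y * z) ^ p.1 / p.1 ! * ((-v / 2 * z ^ 2) ^ p.2 / p.2 !))
      (exp (y * z - v * z ^ 2 / 2)) := by
    have := (hasSum_pow_div_factorial _).mul (hasSum_pow_div_factorial _)
      (summable_mul_of_summable_norm (hexp (y * z)) (hexp (-v / 2 * z ^ 2)))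
    rwa [← exp_add, show y * z + -v / 2 * z ^ 2 = y * z - v * z ^ 2 / 2 by ring] at this
  -- reindex the product series along `(i, k) ↦ (i + 2k, k)` and sum over the first coordinate
  set F : ℕ × ℕ → ℝ := fun q => if 2 * q.2 ≤ q.1 then
    y ^ (q.1 - 2 * q.2) / (q.1 - 2 * q.2)! * ((-v / 2) ^ q.2 / q.2 !) * z ^ q.1 else 0
  have hinj : Function.Injective fun p : ℕ × ℕ => (p.1 + 2 * p.2, p.2) := by
    intro p q h
    simp only [Prod.mk.injEq] at h
    exact Prod.ext (by omega) h.2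
  have hF : HasSum F (exp (y * z - v * z ^ 2 / 2)) := by
    refine (hinj.hasSum_iff fun q hq => if_neg fun hle => hq ⟨(q.1 - 2 * q.2, q.2), ?_⟩).mp ?_
    · exact Prod.ext (Nat.sub_add_cancel hle) rfl
    · refine hprod.congr_fun fun p => ?_
      simp only [Function.comp_apply, Nat.le_add_left, if_true, Nat.add_sub_cancel]
      rw [pow_add, pow_mul, mul_pow, mul_pow]
      ring
  refine hF.prod_fiberwise fun n => ?_
  have hfiber : ∑ k ∈ range (n / 2 + 1), F (n, k) = hermiteVar n v y * z ^ n / n ! := by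
    rw [hermiteVar, mul_comm (n ! : ℝ), mul_assoc, mul_div_assoc,
      mul_div_cancel_left₀ _ (by positivity), sum_mul]
    exact sum_congr rfl fun k hk => if_pos (by simp only [mem_range] at hk; omega)
  exact hfiber ▸ hasSum_sum_of_ne_finset_zero fun k hk =>
    if_neg (by simp only [mem_range] at hk; omega)

theorem eq_of_forall_hasSum_pow_div_factorial {a b : ℕ → ℝ} {f : ℝ → ℝ}
    (ha : ∀ z, HasSum (fun n => a n * z ^ n / n !) (f z))
    (hb : ∀ z, HasSum (fun n => b n * z ^ n / n !) (f z)) : a = b := by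
  have hseries : ∀ c : ℕ → ℝ, (∀ z, HasSum (fun n => c n * z ^ n / n !) (f z)) →
      HasFPowerSeriesAt f (FormalMultilinearSeries.ofScalars ℝ fun n => c n / n !) 0 := by
    intro c hc
    refine ⟨⊤, ?_, ENNReal.zero_lt_top, fun {z} _ => ?_⟩
    · refine (FormalMultilinearSeries.radius_eq_top_of_summable_norm _ fun r => ?_).ge
      refine (hc r).summable.abs.congr fun n => ?_
      rw [FormalMultilinearSeries.ofScalars_norm]
      simp [abs_mul, abs_div, abs_pow, div_mul_eq_mul_div]
    · simpa [FormalMultilinearSeries.ofScalars_apply_eq] using (hc z).congr_fun fun n => by ring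
  funext n
  have hcoeff := congrFun (FormalMultilinearSeries.ofScalars_series_injective ℝ ℝ
    ((hseries a ha).eq_formalMultilinearSeries (hseries b hb))) n
  exact (div_left_inj' (by positivity)).mp hcoeff

theorem eq_hermiteVar_of_hasSum {H : ℕ → ℝ → ℝ → ℝ}
    (hgen : ∀ v y z, HasSum (fun n => H n v y * z ^ n / n !) (exp (y * z - v * z ^ 2 / 2))) :
    H = hermiteVar := by
  funext n v y
  exact congrFun (eq_of_forall_hasSum_pow_div_factorial (hgen v y) (hasSum_hermiteVar v y)) n

@[fun_prop]
lemma continuous_hermiteVar (n : ℕ) (v : ℝ) : Continuous (hermiteVar n v) := by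
  unfold hermiteVar
  fun_prop

lemma hermiteVar_nonneg {v y : ℝ} (hv : v ≤ 0) (hy : 0 ≤ y) (n : ℕ) :
    0 ≤ hermiteVar n v y := by
  have : 0 ≤ -v / 2 := by linarith
  unfold hermiteVar
  positivity

lemma abs_hermiteVar_le {v : ℝ} (hv : 0 ≤ v) (n : ℕ) (y : ℝ) :
    |hermiteVar n v y| ≤ hermiteVar n (-v) |y| := by
  rw [hermiteVar, hermiteVar, abs_mul, abs_of_nonneg (by positivity : (0 : ℝ) ≤ n !)]
  gcongr
  refine (abs_sum_le_sum_abs _ _).trans_eq (sum_congr rfl fun k _ => ?_)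
  simp [abs_mul, abs_div, abs_pow, abs_of_nonneg hv]

lemma abs_hermiteVar_le_exp {v : ℝ} (hv : 0 ≤ v) (n : ℕ) (y : ℝ) :
    |hermiteVar n v y| ≤ n ! * exp (v / 2) * exp |y| := by
  have hterm := le_hasSum (hasSum_hermiteVar (-v) |y| 1) n fun m _ => by
    have := hermiteVar_nonneg (neg_nonpos.mpr hv) (abs_nonneg y) m
    positivity
  rw [one_pow, mul_one, div_le_iff₀ (by positivity)] at hterm
  refine (abs_hermiteVar_le hv n y).trans (hterm.trans_eq ?_)
  rw [mul_comm, mul_assoc, ← exp_add]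
  congr 2
  ring

theorem hasSum_integral_mul_hermiteVar {μ : Measure ℝ} {ψ : ℝ → ℝ} {v : ℝ} (hv : 0 ≤ v)
    (z : ℝ) (hψ : AEStronglyMeasurable ψ μ) (hint : Integrable (fun y => ψ y * exp (|z| * |y|)) μ) :
    HasSum (fun n => (∫ y, ψ y * hermiteVar n v y ∂μ) * z ^ n / n !)
      (∫ y, ψ y * exp (y * z - v * z ^ 2 / 2) ∂μ) := by
  -- `|H_n(y; v)| ≤ H_n(|y|; -v)`, whose generating series converges to `exp (|y||z| + v z²/2)`
  have hbound : ∀ y, HasSum (fun n => |ψ y| * (hermiteVar n (-v) |y| * |z| ^ n / n !))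
      (|ψ y| * exp (|z| * |y|) * exp (v * z ^ 2 / 2)) := fun y => by
    rw [mul_assoc, ← exp_add, show |z| * |y| + v * z ^ 2 / 2 = |y| * |z| - -v * |z| ^ 2 / 2 by
      rw [sq_abs]; ring]
    exact (hasSum_hermiteVar (-v) |y| |z|).mul_left |ψ y|
  have hterms : (fun n => (∫ y, ψ y * hermiteVar n v y ∂μ) * z ^ n / n !)
      = fun n => ∫ y, ψ y * hermiteVar n v y * (z ^ n / n !) ∂μ :=
    funext fun n => by rw [integral_mul_const, mul_div_assoc]
  rw [hterms]
  refine hasSum_integral_of_dominated_convergence _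
    (fun n => (hψ.mul (continuous_hermiteVar n v).aestronglyMeasurable).mul_const _)
    (fun n => ae_of_all _ fun y => ?_) (ae_of_all _ fun y => (hbound y).summable) ?_
    (ae_of_all _ fun y => ?_)
  · simp only [norm_mul, norm_div, norm_pow, Real.norm_eq_abs, Nat.abs_cast]
    rw [mul_assoc, ← mul_div_assoc]
    gcongr
    exact abs_hermiteVar_le hv n y
  · simp_rw [fun y => (hbound y).tsum_eq]
    exact hint.norm.mul_const (exp (v * z ^ 2 / 2)) |>.congr (ae_of_all _ fun y => by
      simp [norm_mul, abs_of_pos (exp_pos _)])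
  · simpa [mul_assoc, mul_div_assoc] using (hasSum_hermiteVar v y z).mul_left (ψ y)

section GaussianReal

variable {μ : ℝ} {v : ℝ≥0}

lemma integrable_exp_mul_abs_gaussianReal (c : ℝ) :
    Integrable (fun y => exp (c * |y|)) (gaussianReal μ v) := by
  refine ((integrable_exp_mul_gaussianReal c).add (integrable_exp_mul_gaussianReal (-c))).mono'
    (by fun_prop) (ae_of_all _ fun y => ?_)
  rw [norm_of_nonneg (exp_pos _).le]
  rcases abs_cases y with ⟨h, _⟩ | ⟨h, _⟩ <;> rw [h]
  · exact le_add_of_nonneg_right (exp_pos _).le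
  · rw [mul_neg, ← neg_mul]
    exact le_add_of_nonneg_left (exp_pos _).le

lemma integrable_mul_exp_abs_gaussianReal {ψ : ℝ → ℝ}
    (hψ : AEStronglyMeasurable ψ (gaussianReal μ v)) {C R : ℝ}
    (hb : ∀ y, |ψ y| ≤ C * exp (R * |y|)) (r : ℝ) :
    Integrable (fun y => ψ y * exp (r * |y|)) (gaussianReal μ v) := by
  refine ((integrable_exp_mul_abs_gaussianReal (R + r)).const_mul C).mono'
    (hψ.mul (by fun_prop)) (ae_of_all _ fun y => ?_)
  rw [norm_mul, Real.norm_eq_abs, norm_of_nonneg (exp_pos _).le, add_mul, exp_add, ← mul_assoc]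
  gcongr
  exact hb y

lemma integral_exp_mul_exp_gaussianReal (s t : ℝ) :
    ∫ y, exp (y * s - v * s ^ 2 / 2) * exp (y * t - v * t ^ 2 / 2) ∂gaussianReal 0 v
      = exp (v * s * t) := by
  have hmgf := congrFun (mgf_id_gaussianReal (μ := 0) (v := v)) (s + t)
  rw [mgf] at hmgf
  calc ∫ y, exp (y * s - v * s ^ 2 / 2) * exp (y * t - v * t ^ 2 / 2) ∂gaussianReal 0 v
      = ∫ y, exp (-(v * s ^ 2 / 2 + v * t ^ 2 / 2)) * exp ((s + t) * id y) ∂gaussianReal 0 v :=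
        integral_congr_ae (ae_of_all _ fun y => by
          dsimp only [id]
          rw [← exp_add, ← exp_add]
          ring_nf)
    _ = exp (v * s * t) := by
        rw [integral_const_mul, hmgf, ← exp_add]
        ring_nf

lemma integral_exp_mul_hermiteVar_gaussianReal (t : ℝ) (m : ℕ) :
    ∫ y, exp (y * t - v * t ^ 2 / 2) * hermiteVar m v y ∂gaussianReal 0 v = (v * t) ^ m := by
  refine congrFun (eq_of_forall_hasSum_pow_div_factorial (f := fun z => exp (v * t * z))
    (a := fun k => ∫ y, exp (y * t - v * t ^ 2 / 2) * hermiteVar k v y ∂gaussianReal 0 v)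
    (b := fun k => (v * t) ^ k) (fun z => ?_) fun z => ?_) m
  · rw [← integral_exp_mul_exp_gaussianReal]
    refine hasSum_integral_mul_hermiteVar v.2 z (by fun_prop)
      (integrable_mul_exp_abs_gaussianReal (by fun_prop) (C := 1) (R := |t|) (fun y => ?_) _)
    rw [abs_of_pos (exp_pos _), one_mul, exp_le_exp]
    nlinarith [le_abs_self (y * t), abs_mul y t, mul_nonneg v.2 (sq_nonneg t)]
  · simpa [mul_pow] using hasSum_pow_div_factorial (v * t * z)

theorem integral_hermiteVar_mul_hermiteVar_gaussianReal (m n : ℕ) :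
    ∫ y, hermiteVar m v y * hermiteVar n v y ∂gaussianReal 0 v
      = if m = n then (v : ℝ) ^ n * n ! else 0 := by
  have hHm : AEStronglyMeasurable (hermiteVar m v) (gaussianReal 0 v) := by fun_prop
  refine congrFun (eq_of_forall_hasSum_pow_div_factorial (f := fun t => (v * t) ^ m)
    (a := fun k => ∫ y, hermiteVar m v y * hermiteVar k v y ∂gaussianReal 0 v)
    (b := fun k => if m = k then (v : ℝ) ^ k * k ! else 0) (fun t => ?_) fun t => ?_) n
  · rw [← integral_exp_mul_hermiteVar_gaussianReal]
    simp_rw [mul_comm (exp _)]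
    exact hasSum_integral_mul_hermiteVar v.2 t hHm (integrable_mul_exp_abs_gaussianReal hHm
      (C := m ! * exp (v / 2)) (R := 1)
      (fun y => (abs_hermiteVar_le_exp v.2 m y).trans_eq (by simp)) _)
  · refine (hasSum_ite_eq m ((v * t) ^ m)).congr_fun fun k => ?_
    obtain rfl | hk := eq_or_ne m k
    · rw [if_pos rfl, if_pos rfl, mul_pow]
      field_simp
    · simp [hk, Ne.symm hk]

end GaussianReal

section PiGaussian

variable {ι : Type*} [Fintype ι]

lemma pi_gaussianReal_eq_withDensity {v : ι → ℝ≥0} (hv : ∀ i, v i ≠ 0) :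
    Measure.pi (fun i => gaussianReal 0 (v i))
      = volume.withDensity fun x => ENNReal.ofReal (∏ i, gaussianPDFReal 0 (v i) (x i)) := by
  refine Measure.pi_eq fun s hs => ?_
  rw [withDensity_apply _ (MeasurableSet.univ_pi hs), volume_pi, Measure.restrict_pi_pi,
    ← ofReal_integral_eq_lintegral_ofReal, integral_fintype_prod_eq_prod,
    ENNReal.ofReal_prod_of_nonneg]
  · exact prod_congr rfl fun i _ => (gaussianReal_apply_eq_integral 0 (hv i) (s i)).symm
  · exact fun i _ => integral_nonneg fun x => gaussianPDFReal_nonneg _ _ _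
  · exact Integrable.fintype_prod fun i => (integrable_gaussianPDFReal 0 (v i)).restrict
  · exact ae_of_all _ fun x => prod_nonneg fun i _ => gaussianPDFReal_nonneg _ _ _

lemma integral_pi_gaussianReal {v : ι → ℝ≥0} (hv : ∀ i, v i ≠ 0) (F : (ι → ℝ) → ℝ) :
    ∫ x, F x ∂Measure.pi (fun i => gaussianReal 0 (v i))
      = ∫ x, (∏ i, gaussianPDFReal 0 (v i) (x i)) * F x := by
  rw [pi_gaussianReal_eq_withDensity hv, integral_withDensity_eq_integral_toReal_smul
    (by fun_prop) (ae_of_all _ fun _ => ENNReal.ofReal_lt_top)]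
  simp only [smul_eq_mul,
    ENNReal.toReal_ofReal (prod_nonneg fun i _ => gaussianPDFReal_nonneg _ _ _)]

variable (v : ι → ℝ≥0)

lemma hasLaw_eval_pi_gaussianReal (i : ι) :
    HasLaw (fun x : ι → ℝ => x i) (gaussianReal 0 (v i))
      (Measure.pi fun i => gaussianReal 0 (v i)) :=
  ⟨(measurable_pi_apply i).aemeasurable, (measurePreserving_eval _ i).map_eq⟩

lemma iIndepFun_eval_pi_gaussianReal :
    iIndepFun (fun i (x : ι → ℝ) => x i) (Measure.pi fun i => gaussianReal 0 (v i)) :=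
  iIndepFun_pi (X := fun _ => id) fun _ => aemeasurable_id

lemma hasGaussianLaw_id_pi_gaussianReal :
    HasGaussianLaw (fun x => x) (Measure.pi fun i => gaussianReal 0 (v i)) :=
  (iIndepFun_eval_pi_gaussianReal v).hasGaussianLaw
    fun i => (hasLaw_eval_pi_gaussianReal v i).hasGaussianLaw

lemma covariance_eval_pi_gaussianReal [DecidableEq ι] (i j : ι) :
    cov[fun x : ι → ℝ => x i, fun x => x j; Measure.pi fun i => gaussianReal 0 (v i)]
      = if i = j then (v i : ℝ) else 0 := by
  split_ifs with h
  · subst h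
    rw [covariance_self (measurable_pi_apply i).aemeasurable,
      (hasLaw_eval_pi_gaussianReal v i).variance_eq, variance_id_gaussianReal]
  · exact ((iIndepFun_eval_pi_gaussianReal v).indepFun h).covariance_eq_zero
      (hasLaw_eval_pi_gaussianReal v i).hasGaussianLaw.memLp_two
      (hasLaw_eval_pi_gaussianReal v j).hasGaussianLaw.memLp_two

lemma covariance_linear_pi_gaussianReal (c d : ι → ℝ) :
    cov[fun x : ι → ℝ => ∑ i, c i * x i, fun x => ∑ i, d i * x i;
      Measure.pi fun i => gaussianReal 0 (v i)] = ∑ i, c i * d i * v i := by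
  classical
  have hL2 : ∀ (c : ι → ℝ) i,
      MemLp (fun x : ι → ℝ => c i * x i) 2 (Measure.pi fun i => gaussianReal 0 (v i)) :=
    fun c i => (hasLaw_eval_pi_gaussianReal v i).hasGaussianLaw.memLp_two.const_mul (c i)
  rw [covariance_fun_sum_fun_sum (hL2 c) (hL2 d)]
  simp_rw [covariance_const_mul_left, covariance_const_mul_right, covariance_eval_pi_gaussianReal,
    mul_ite, mul_zero, sum_ite_eq, mem_univ, if_true]
  exact sum_congr rfl fun i _ => by ring

lemma integral_linear_pi_gaussianReal (c : ι → ℝ) :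
    ∫ x, ∑ i, c i * x i ∂(Measure.pi fun i => gaussianReal 0 (v i)) = 0 := by
  rw [integral_finsetSum _ fun i _ =>
    (hasLaw_eval_pi_gaussianReal v i).hasGaussianLaw.integrable.const_mul (c i)]
  simp [integral_const_mul, (hasLaw_eval_pi_gaussianReal v _).integral_eq]

variable {κ : Type*} [Fintype κ]

lemma hasGaussianLaw_linear_pi_gaussianReal (U : κ → ι → ℝ) :
    HasGaussianLaw (fun x k => ∑ i, U k i * x i) (Measure.pi fun i => gaussianReal 0 (v i)) :=
  (hasGaussianLaw_id_pi_gaussianReal v).map_fun (Matrix.mulVecLin U).toContinuousLinearMap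

lemma hasLaw_linear_pi_gaussianReal (U : κ → ι → ℝ) (k : κ) :
    HasLaw (fun x => ∑ i, U k i * x i) (gaussianReal 0 (∑ i, U k i ^ 2 * v i).toNNReal)
      (Measure.pi fun i => gaussianReal 0 (v i)) := by
  have hY := (hasGaussianLaw_linear_pi_gaussianReal v U).eval k
  refine ⟨hY.aemeasurable, ?_⟩
  rw [hY.map_eq_gaussianReal, integral_linear_pi_gaussianReal,
    covariance_self hY.aemeasurable |>.symm, covariance_linear_pi_gaussianReal]
  simp_rw [sq]

theorem integral_prod_linear_pi_gaussianReal (U : κ → ι → ℝ)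
    (hU : ∀ k l, k ≠ l → ∑ i, U k i * U l i * v i = 0) {f : κ → ℝ → ℝ}
    (hf : ∀ k, Measurable (f k)) :
    ∫ x, ∏ k, f k (∑ i, U k i * x i) ∂(Measure.pi fun i => gaussianReal 0 (v i))
      = ∏ k, ∫ y, f k y ∂gaussianReal 0 (∑ i, U k i ^ 2 * v i).toNNReal := by
  have hindep : iIndepFun (fun k (x : ι → ℝ) => ∑ i, U k i * x i)
      (Measure.pi fun i => gaussianReal 0 (v i)) :=
    (hasGaussianLaw_linear_pi_gaussianReal v U).iIndepFun_of_covariance_eq_zero fun k l hkl => by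
      rw [covariance_linear_pi_gaussianReal, hU k l hkl]
  rw [hindep.integral_fun_prod_comp (fun k => (hasLaw_linear_pi_gaussianReal v U k).aemeasurable)
    fun k => (hf k).aestronglyMeasurable]
  exact prod_congr rfl fun k _ =>
    (hasLaw_linear_pi_gaussianReal v U k).integral_comp (hf k).aestronglyMeasurable

end PiGaussian

theorem multivariate_hermite_orthogonality_general
    (d : ℕ) (τ : Fin d → ℝ) (hτ : ∀ i, 0 < τ i)
    (a : Fin d → ℝ)
    (u : Fin d → Fin d → ℝ)
    (horth : ∀ k l, ∑ i, u k i * u l i * (τ i / ∑ i', τ i')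
      = if k = l then a k else 0)
    -- the 1-dimensional Hermite polynomials `H m σ2 y`, generated by
    -- `exp(yz - σ² z²/2) = Σ_m H_m(y;σ²) z^m/m!`
    (H : ℕ → ℝ → ℝ → ℝ)
    (hgen : ∀ (σ2 y z : ℝ),
      HasSum (fun m : ℕ => H m σ2 y * z ^ m / m.factorial)
        (Real.exp (y * z - σ2 * z ^ 2 / 2))) :
    ∀ m n : Fin d → ℕ,
      (∫ x : Fin d → ℝ,
          (∏ i, (Real.sqrt (2 * Real.pi * τ i))⁻¹
              * Real.exp (-(x i ^ 2) / (2 * τ i)))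
            * ((∏ j, H (m j) ((∑ i', τ i') * a j) (∑ i, u j i * x i))
              * ∏ j, H (n j) ((∑ i', τ i') * a j) (∑ i, u j i * x i)))
        = if m = n then
            (∑ i', τ i') ^ (∑ j, n j) * ∏ j, a j ^ n j * (n j).factorial
          else 0 := by
  obtain rfl : H = hermiteVar := eq_hermiteVar_of_hasSum hgen
  intro m n
  set T := ∑ i', τ i'
  have hcov : ∀ k l, ∑ i, u k i * u l i * τ i = if k = l then T * a k else 0 := fun k l => by
    have hT : T ≠ 0 := (sum_pos (fun i _ => hτ i) ⟨k, mem_univ k⟩).ne'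
    rw [← mul_zero T, ← mul_ite, ← horth, mul_sum]
    exact sum_congr rfl fun i _ => by field_simp
  have hvar : ∀ k, ∑ i, u k i ^ 2 * τ i = T * a k := fun k => by simpa [sq] using hcov k k
  have hv : ∀ i, ((τ i).toNNReal : ℝ) = τ i := fun i => Real.coe_toNNReal _ (hτ i).le
  have hσ : ∀ j, ((T * a j).toNNReal : ℝ) = T * a j := fun j =>
    Real.coe_toNNReal _ (hvar j ▸ sum_nonneg fun i _ => by have := hτ i; positivity)
  calc _ = ∫ x, ∏ j, hermiteVar (m j) (T * a j) (∑ i, u j i * x i)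
          * hermiteVar (n j) (T * a j) (∑ i, u j i * x i)
          ∂Measure.pi fun i => gaussianReal 0 (τ i).toNNReal := by
        rw [integral_pi_gaussianReal fun i => by simpa using hτ i]
        congr with x
        simp [gaussianPDFReal, hv, prod_mul_distrib]
    _ = ∏ j, ∫ y, hermiteVar (m j) (T * a j) y * hermiteVar (n j) (T * a j) y
          ∂gaussianReal 0 (T * a j).toNNReal := by
        rw [integral_prod_linear_pi_gaussianReal _ u (fun k l hkl => by simp [hv, hcov, hkl])
          (f := fun j y => hermiteVar (m j) (T * a j) y * hermiteVar (n j) (T * a j) y)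
          fun j => by fun_prop]
        simp [hv, hvar]
    _ = ∏ j, if m j = n j then (T * a j) ^ n j * (n j)! else 0 := prod_congr rfl fun j _ => by
        simpa [hσ j] using
          integral_hermiteVar_mul_hermiteVar_gaussianReal (v := (T * a j).toNNReal) (m j) (n j)
    _ = _ := by
        simp_rw [Fintype.prod_ite_zero, ← funext_iff, mul_pow, mul_assoc, prod_mul_distrib,
          prod_pow_eq_pow_sum]

/-- Orthogonality of the multivariate Hermite polynomials
`H_n(x;τ,u) = Π_j H_{n_j}(\hat x_j; |τ| a_j)` with `\hat x_j = Σ_i u_i^{(j)} x_i`,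
with respect to the product of `N(0,τ_i)` distributions:
`E[H_m H_n] = δ_{mn} |τ|^{|n|} Π_j a_j^{n_j} n_j!`. -/
theorem multivariate_hermite_orthogonality
    (d : ℕ) [NeZero d] (τ : Fin d → ℝ) (hτ : ∀ i, 0 < τ i)
    (a : Fin d → ℝ) (ha : ∀ j, 0 < a j)
    (u : Fin d → Fin d → ℝ) (hu0 : ∀ i, u 0 i = 1)
    (horth : ∀ k l, ∑ i, u k i * u l i * (τ i / ∑ i', τ i')
      = if k = l then a k else 0)
    -- the 1-dimensional Hermite polynomials `H m σ2 y`, generated by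
    -- `exp(yz - σ² z²/2) = Σ_m H_m(y;σ²) z^m/m!`
    (H : ℕ → ℝ → ℝ → ℝ)
    (hgen : ∀ (σ2 y z : ℝ),
      HasSum (fun m : ℕ => H m σ2 y * z ^ m / m.factorial)
        (Real.exp (y * z - σ2 * z ^ 2 / 2))) :
    ∀ m n : Fin d → ℕ,
      (∫ x : Fin d → ℝ,
          (∏ i, (Real.sqrt (2 * Real.pi * τ i))⁻¹
              * Real.exp (-(x i ^ 2) / (2 * τ i)))
            * ((∏ j, H (m j) ((∑ i', τ i') * a j) (∑ i, u j i * x i))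
              * ∏ j, H (n j) ((∑ i', τ i') * a j) (∑ i, u j i * x i)))
        = if m = n then
            (∑ i', τ i') ^ (∑ j, n j) * ∏ j, a j ^ n j * (n j).factorial
          else 0 :=
  multivariate_hermite_orthogonality_general d τ hτ a u horth H hgen
end
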